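/- arXiv:math/0506550 — 3 statements merged into one kernel-verified Lean document; each statement's English description precedes it below -/
import Mathlib

section
/- Let g ≥ 4, let X be a set, and let ω₁,…,ω_g : X → ℂ be functions such that the ℂ-linear span of the pointwise products ω_i·ω_j (1 ≤ i ≤ j ≤ g) has dimension at most 3g−3. Then for every choice of points p₁,…,p_g ∈ X and q₁,…,q_{2g−2} ∈ X, and for every pair (k,l) with 3 ≤ k < l ≤ g, the (2g−2)×(2g−2) matrix A(k,l) satisfies det A(k,l) = 0. -/
/-- `detOm g ω x` is the determinant of the `g × g` matrix with `(i,j)`-entry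
`ω_i(x_j)` (all indices 1-based). -/
noncomputable def detOm {X : Type*} (g : ℕ) (ω : ℕ → X → ℂ) (x : ℕ → X) : ℂ :=
  (Matrix.of fun a b : Fin g => ω ((a : ℕ) + 1) (x ((b : ℕ) + 1))).det

/-- Replace the `i`-th point (1-based) of the tuple `p` by `y`. -/
def updPt {X : Type*} (p : ℕ → X) (i : ℕ) (y : X) : ℕ → X :=
  fun m => if m = i then y else p m

/-- `a_{ij,r} = det ω(p₁,…,q_r,…,p_g) ⬝ det ω(p₁,…,q_r,…,p_g)` with `q_r` in the
`i`-th resp. `j`-th slot. -/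
noncomputable def aCoef {X : Type*} (g : ℕ) (ω : ℕ → X → ℂ) (p q : ℕ → X)
    (i j r : ℕ) : ℂ :=
  detOm g ω (updPt p i (q r)) * detOm g ω (updPt p j (q r))

/-- The pair `(m,n)` indexing the `c`-th column (1-based, `c = 1,…,2g-2`) of the
matrix `A(k,l)`: the pairs are `(1,2),…,(1,g),(2,3),…,(2,g),(k,l)`. -/
def colPair (g k l c : ℕ) : ℕ × ℕ :=
  if c ≤ g - 1 then (1, c + 1)
  else if c ≤ 2 * g - 3 then (2, c - g + 3)
  else (k, l)

/-- The `(2g-2) × (2g-2)` matrix `A(k,l)` with `(r,c)`-entry `a_{(colPair c), r}`. -/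
noncomputable def Amat {X : Type*} (g : ℕ) (ω : ℕ → X → ℂ) (p q : ℕ → X) (k l : ℕ) :
    Matrix (Fin (2 * g - 2)) (Fin (2 * g - 2)) ℂ :=
  Matrix.of fun r c =>
    aCoef g ω p q (colPair g k l ((c : ℕ) + 1)).1 (colPair g k l ((c : ℕ) + 1)).2 ((r : ℕ) + 1)

namespace DetAProof

open Matrix Finset

variable {X : Type*}

/-- The `g × g` matrix `ω_a(p_b)`. -/
noncomputable def Apm (g : ℕ) (ω : ℕ → X → ℂ) (p : ℕ → X) : Matrix (Fin g) (Fin g) ℂ :=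
  Matrix.of fun a b => ω ((a : ℕ) + 1) (p ((b : ℕ) + 1))

/-- `vn i y = detOm` with `p_i` replaced by `y` (1-based `i`). -/
noncomputable def vn (g : ℕ) (ω : ℕ → X → ℂ) (p : ℕ → X) (i : ℕ) (y : X) : ℂ :=
  detOm g ω (updPt p i y)

lemma vn_eq_cramer (g : ℕ) (ω : ℕ → X → ℂ) (p : ℕ → X) (i : Fin g) (y : X) :
    vn g ω p ((i : ℕ) + 1) y
      = Matrix.cramer (Apm g ω p) (fun a => ω ((a : ℕ) + 1) y) i := by
  rw [Matrix.cramer_apply, vn, detOm]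
  congr 1
  ext a b
  by_cases h : b = i
  · subst h
    simp [updPt, Matrix.updateCol_apply, Apm]
  · have h' : (b : ℕ) + 1 ≠ (i : ℕ) + 1 := by
      simp only [ne_eq, Nat.add_right_cancel_iff]
      exact fun hh => h (Fin.ext hh)
    simp [updPt, Matrix.updateCol_apply, h, h', Apm, Fin.val_eq_val]

lemma vn_apply_p (g : ℕ) (ω : ℕ → X → ℂ) (p : ℕ → X) {i j : ℕ}
    (hi1 : 1 ≤ i) (hig : i ≤ g) (hj1 : 1 ≤ j) (hjg : j ≤ g) :
    vn g ω p i (p j) = if i = j then (Apm g ω p).det else 0 := by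
  have hi : i - 1 < g := by omega
  have hj : j - 1 < g := by omega
  have hi' : (⟨i - 1, hi⟩ : Fin g) = (⟨i-1, hi⟩ : Fin g) := rfl
  have h1 : i = ((⟨i - 1, hi⟩ : Fin g) : ℕ) + 1 := by simp; omega
  have h2 : j = ((⟨j - 1, hj⟩ : Fin g) : ℕ) + 1 := by simp; omega
  rw [h1, h2, vn_eq_cramer, Matrix.cramer_apply]
  by_cases hij : i = j
  · have : (⟨i - 1, hi⟩ : Fin g) = ⟨j - 1, hj⟩ := by simp [hij]
    rw [← this]
    have hcol : (fun a : Fin g => ω ((a : ℕ) + 1) (p (((⟨i-1, hi⟩ : Fin g) : ℕ) + 1)))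
        = fun a => Apm g ω p a ⟨i - 1, hi⟩ := rfl
    rw [hcol, Matrix.updateCol_eq_self]
    simp [hij]
  · have hne : (⟨j - 1, hj⟩ : Fin g) ≠ ⟨i - 1, hi⟩ := by
      simp only [ne_eq, Fin.mk.injEq]; omega
    rw [if_neg (by omega : ¬ ((⟨i - 1, hi⟩ : Fin g) : ℕ) + 1 = ((⟨j - 1, hj⟩ : Fin g) : ℕ) + 1)]
    apply Matrix.det_zero_of_column_eq hne.symm
    intro a
    simp [Matrix.updateCol_apply, hne, Apm]


/-- The set of products of the `ω`'s, as in the theorem statement. -/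
def prodSet (g : ℕ) (ω : ℕ → X → ℂ) : Set (X → ℂ) :=
  {f : X → ℂ | ∃ i j, 1 ≤ i ∧ i ≤ j ∧ j ≤ g ∧ f = fun z => ω i z * ω j z}

lemma prodSet_finite (g : ℕ) (ω : ℕ → X → ℂ) : (prodSet g ω).Finite := by
  have hsub : prodSet g ω ⊆
      (fun ij : ℕ × ℕ => fun z => ω ij.1 z * ω ij.2 z) '' (Set.Icc 1 g ×ˢ Set.Icc 1 g) := by
    rintro f ⟨i, j, h1, h2, h3, rfl⟩
    exact ⟨(i, j), ⟨⟨h1, by omega⟩, ⟨by omega, h3⟩⟩, rfl⟩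
  exact Set.Finite.subset (Set.Finite.image _
    (Set.Finite.prod (Set.finite_Icc _ _) (Set.finite_Icc _ _))) hsub

lemma omega_prod_mem (g : ℕ) (ω : ℕ → X → ℂ) (a b : Fin g) :
    (fun z => ω ((a : ℕ) + 1) z * ω ((b : ℕ) + 1) z) ∈ Submodule.span ℂ (prodSet g ω) := by
  have ha := a.isLt
  have hb := b.isLt
  rcases le_total ((a : ℕ) + 1) ((b : ℕ) + 1) with h | h
  · exact Submodule.subset_span ⟨(a : ℕ) + 1, (b : ℕ) + 1, by omega, h, by omega, rfl⟩
  · have heq : (fun z => ω ((a : ℕ) + 1) z * ω ((b : ℕ) + 1) z)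
        = fun z => ω ((b : ℕ) + 1) z * ω ((a : ℕ) + 1) z := funext fun z => mul_comm _ _
    rw [heq]
    exact Submodule.subset_span ⟨(b : ℕ) + 1, (a : ℕ) + 1, by omega, h, by omega, rfl⟩

/-- Expansion of `vn` as a linear combination of the `ω`'s. -/
lemma vn_expand (g : ℕ) (ω : ℕ → X → ℂ) (p : ℕ → X) (i : Fin g) (y : X) :
    vn g ω p ((i : ℕ) + 1) y
      = ∑ a : Fin g, ω ((a : ℕ) + 1) y *
          Matrix.cramer (Apm g ω p) (Pi.single a 1) i := by
  rw [vn_eq_cramer]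
  have hfun : (fun a : Fin g => ω ((a : ℕ) + 1) y)
      = ∑ a : Fin g, ω ((a : ℕ) + 1) y • (Pi.single a 1 : Fin g → ℂ) := by
    funext b
    simp [Finset.sum_apply, Pi.single_apply]
  rw [hfun, map_sum]
  simp [Finset.sum_apply]

lemma vn_prod_mem (g : ℕ) (ω : ℕ → X → ℂ) (p : ℕ → X) (i j : Fin g) :
    (fun y => vn g ω p ((i : ℕ) + 1) y * vn g ω p ((j : ℕ) + 1) y)
      ∈ Submodule.span ℂ (prodSet g ω) := by
  have key : (fun y => vn g ω p ((i : ℕ) + 1) y * vn g ω p ((j : ℕ) + 1) y)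
      = ∑ a : Fin g, ∑ b : Fin g,
          (Matrix.cramer (Apm g ω p) (Pi.single a 1) i *
           Matrix.cramer (Apm g ω p) (Pi.single b 1) j) •
          (fun z => ω ((a : ℕ) + 1) z * ω ((b : ℕ) + 1) z) := by
    funext y
    simp only [Finset.sum_apply, Pi.smul_apply, smul_eq_mul]
    rw [vn_expand, vn_expand, Finset.sum_mul_sum]
    refine Finset.sum_congr rfl fun a _ => Finset.sum_congr rfl fun b _ => by ring
  rw [key]
  exact Submodule.sum_mem _ fun a _ => Submodule.sum_mem _ fun b _ =>
    Submodule.smul_mem _ _ (omega_prod_mem g ω a b)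

/-- Cramer's rule: when `det (Apm) = 0`, each row of `Apm` gives a linear relation
among the functions `vn`. -/
lemma vn_row_rel (g : ℕ) (ω : ℕ → X → ℂ) (p : ℕ → X)
    (hD : (Apm g ω p).det = 0) (a : Fin g) (y : X) :
    ∑ i ∈ Finset.range g, ω ((a : ℕ) + 1) (p (i + 1)) * vn g ω p (i + 1) y = 0 := by
  have h := congrFun (Matrix.mulVec_cramer (Apm g ω p) (fun b : Fin g => ω ((b : ℕ) + 1) y)) a
  rw [hD] at h
  have h' : ∑ i : Fin g, ω ((a : ℕ) + 1) (p ((i : ℕ) + 1)) * vn g ω p ((i : ℕ) + 1) y = 0 := by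
    have := h
    simp only [Matrix.mulVec, dotProduct, zero_smul, Pi.zero_apply] at this
    rw [← this]
    refine Finset.sum_congr rfl fun i _ => ?_
    rw [vn_eq_cramer]
    rfl
  rw [← h']
  exact (Finset.sum_range fun i => ω ((a : ℕ) + 1) (p (i + 1)) * vn g ω p (i + 1) y).symm ▸ rfl


lemma det_eq_zero_of_col_smul {n : ℕ} (M : Matrix (Fin n) (Fin n) ℂ) (i j : Fin n)
    (hij : i ≠ j) (s : ℂ) (h : ∀ a, M a j = s * M a i) : M.det = 0 := by
  have hM : M = M.updateCol j (s • fun a => M a i) := by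
    ext a b
    rw [Matrix.updateCol_apply]
    split_ifs with hb
    · subst hb; simpa using h a
    · rfl
  rw [hM, Matrix.det_updateCol_smul, Matrix.det_updateCol_eq_zero hij, mul_zero]

lemma colPair_bounds (g k l c : ℕ) (hg : 4 ≤ g) (hk : 3 ≤ k) (hkl : k < l) (hl : l ≤ g)
    (hc1 : 1 ≤ c) (hc2 : c ≤ 2 * g - 2) :
    1 ≤ (colPair g k l c).1 ∧ (colPair g k l c).1 < (colPair g k l c).2 ∧
      (colPair g k l c).2 ≤ g := by
  unfold colPair
  split_ifs with h1 h2 <;> simp <;> omega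

lemma colPair_low (g k l c : ℕ) (h2 : c ≤ g - 1) : colPair g k l c = (1, c + 1) :=
  if_pos h2

lemma sum_shift (n : ℕ) (hn : 1 ≤ n) (f : ℕ → ℂ) :
    ∑ i ∈ Finset.range n, f i = (∑ i ∈ Finset.range (n - 1), f (i + 1)) + f 0 := by
  obtain ⟨m, rfl⟩ : ∃ m, n = m + 1 := ⟨n - 1, by omega⟩
  simpa using Finset.sum_range_succ' f m

section ExistsRel

variable (g : ℕ) (ω : ℕ → X → ℂ) (p : ℕ → X) (k l : ℕ)

/-- The target statement: a nontrivial linear relation among the column functions. -/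
def RelStmt : Prop :=
  ∃ Λ : Fin (2 * g - 2) → ℂ, Λ ≠ 0 ∧ ∀ y : X,
    ∑ c : Fin (2 * g - 2), Λ c *
      (vn g ω p (colPair g k l ((c : ℕ) + 1)).1 y *
       vn g ω p (colPair g k l ((c : ℕ) + 1)).2 y) = 0

lemma rel_of_v0 (hg : 4 ≤ g)
    (hv0 : ∀ y : X, vn g ω p 1 y * vn g ω p 2 y = 0) : RelStmt g ω p k l := by
  have hpos : 0 < 2 * g - 2 := by omega
  refine ⟨fun c => if (c : ℕ) = 0 then 1 else 0, ?_, ?_⟩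
  · intro h0
    have := congrFun h0 ⟨0, hpos⟩
    simp at this
  · intro y
    rw [Finset.sum_eq_single (⟨0, hpos⟩ : Fin (2 * g - 2))]
    · have h01 : ((⟨0, hpos⟩ : Fin (2 * g - 2)) : ℕ) = 0 := rfl
      rw [h01, colPair_low g k l (0 + 1) (by omega)]
      simpa using hv0 y
    · intro b _ hb
      have hb' : (b : ℕ) ≠ 0 := fun h => hb (Fin.ext h)
      simp [hb']
    · intro h
      exact absurd (Finset.mem_univ _) h

lemma rel_of_e (hg : 4 ≤ g) (e : ℕ → ℂ) (he1 : e 1 = 0)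
    (herel : ∀ y : X, ∑ i ∈ Finset.range g, e (i + 1) * vn g ω p (i + 1) y = 0)
    (hene : ∃ i, 2 ≤ i ∧ i ≤ g ∧ e i ≠ 0) : RelStmt g ω p k l := by
  refine ⟨fun c => if (c : ℕ) + 1 ≤ g - 1 then e ((c : ℕ) + 2) else 0, ?_, ?_⟩
  · obtain ⟨i, hi2, hig, hie⟩ := hene
    intro h0
    have := congrFun h0 ⟨i - 2, by omega⟩
    rw [if_pos (by simp; omega)] at this
    simp only [Pi.zero_apply] at this
    have hi' : (((⟨i - 2, by omega⟩ : Fin (2 * g - 2)) : ℕ)) + 2 = i := by simp; omega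
    rw [hi'] at this
    exact hie this
  · intro y
    have hstep1 : ∑ c : Fin (2 * g - 2),
        (if (c : ℕ) + 1 ≤ g - 1 then e ((c : ℕ) + 2) else 0) *
          (vn g ω p (colPair g k l ((c : ℕ) + 1)).1 y *
           vn g ω p (colPair g k l ((c : ℕ) + 1)).2 y)
        = ∑ c ∈ Finset.range (2 * g - 2),
        (if c + 1 ≤ g - 1 then e (c + 2) else 0) *
          (vn g ω p (colPair g k l (c + 1)).1 y *
           vn g ω p (colPair g k l (c + 1)).2 y) :=
      Fin.sum_univ_eq_sum_range (fun c =>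
        (if c + 1 ≤ g - 1 then e (c + 2) else 0) *
          (vn g ω p (colPair g k l (c + 1)).1 y *
           vn g ω p (colPair g k l (c + 1)).2 y)) (2 * g - 2)
    rw [hstep1]
    rw [← Finset.sum_subset (Finset.range_subset_range.mpr (by omega : g - 1 ≤ 2 * g - 2))
      (fun x hx hnx => by
        rw [if_neg (by simp only [Finset.mem_range] at hnx; omega), zero_mul])]
    have hstep2 : ∀ c ∈ Finset.range (g - 1),
        (if c + 1 ≤ g - 1 then e (c + 2) else 0) *
          (vn g ω p (colPair g k l (c + 1)).1 y *
           vn g ω p (colPair g k l (c + 1)).2 y)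
        = e (c + 2) * (vn g ω p 1 y * vn g ω p (c + 2) y) := by
      intro c hc
      simp only [Finset.mem_range] at hc
      rw [if_pos (by omega), colPair_low g k l (c + 1) (by omega)]
    rw [Finset.sum_congr rfl hstep2]
    have hinner : ∑ c ∈ Finset.range (g - 1), e (c + 2) * vn g ω p (c + 2) y = 0 := by
      have hs := sum_shift g (by omega) (fun i => e (i + 1) * vn g ω p (i + 1) y)
      rw [herel y, he1, zero_mul, add_zero] at hs
      exact hs.symm
    calc ∑ c ∈ Finset.range (g - 1), e (c + 2) * (vn g ω p 1 y * vn g ω p (c + 2) y)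
        = vn g ω p 1 y * ∑ c ∈ Finset.range (g - 1), e (c + 2) * vn g ω p (c + 2) y := by
          rw [Finset.mul_sum]
          exact Finset.sum_congr rfl fun c _ => by ring
      _ = 0 := by rw [hinner, mul_zero]

end ExistsRel

section ExistsRel2

variable (g : ℕ) (ω : ℕ → X → ℂ) (p : ℕ → X) (k l : ℕ)

lemma relstmt_of_detzero (hg : 4 ≤ g) (hD : (Apm g ω p).det = 0) :
    RelStmt g ω p k l := by
  by_cases hcase : ∃ e : ℕ → ℂ, e 1 = 0 ∧
      (∀ y : X, ∑ i ∈ Finset.range g, e (i + 1) * vn g ω p (i + 1) y = 0) ∧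
      ∃ i, 2 ≤ i ∧ i ≤ g ∧ e i ≠ 0
  · obtain ⟨e, he1, herel, hene⟩ := hcase
    exact rel_of_e g ω p k l hg e he1 herel hene
  · push_neg at hcase
    apply rel_of_v0 g ω p k l hg
    suffices hv1 : ∀ y : X, vn g ω p 1 y = 0 by
      intro y; rw [hv1 y, zero_mul]
    have h0g : (0 : ℕ) < g := by omega
    have h1g : (1 : ℕ) < g := by omega
    have h2g : (2 : ℕ) < g := by omega
    have hne10 : (⟨1, h1g⟩ : Fin g) ≠ ⟨0, h0g⟩ := by simp [Fin.ext_iff]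
    have hne20 : (⟨2, h2g⟩ : Fin g) ≠ ⟨0, h0g⟩ := by simp [Fin.ext_iff]
    have e1 : (1 : ℕ) = ((⟨0, h0g⟩ : Fin g) : ℕ) + 1 := rfl
    by_cases hp1 : ∀ a : Fin g, ω ((a : ℕ) + 1) (p 1) = 0
    · have hzero : ∀ (a : Fin g) (i : ℕ), 1 ≤ i → i ≤ g → ω ((a : ℕ) + 1) (p i) = 0 := by
        intro a i h1 h2
        rcases Nat.eq_or_lt_of_le h1 with h | h
        · rw [← h]; exact hp1 a
        · exact hcase (fun m => ω ((a : ℕ) + 1) (p m)) (hp1 a)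
            (vn_row_rel g ω p hD a) i (by omega) h2
      intro y
      rw [e1, vn_eq_cramer, Matrix.cramer_apply]
      apply Matrix.det_eq_zero_of_column_eq_zero ⟨1, h1g⟩
      intro a
      rw [Matrix.updateCol_ne hne10]
      exact hzero a 2 (by omega) (by omega)
    · push_neg at hp1
      obtain ⟨a0, hβ⟩ := hp1
      have hprop : ∀ (a : Fin g) (i : ℕ), 1 ≤ i → i ≤ g →
          ω ((a0 : ℕ) + 1) (p 1) * ω ((a : ℕ) + 1) (p i)
            = ω ((a : ℕ) + 1) (p 1) * ω ((a0 : ℕ) + 1) (p i) := by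
        intro a i h1 h2
        rcases Nat.eq_or_lt_of_le h1 with h | h
        · rw [← h]; ring
        · have herel : ∀ y : X, ∑ j ∈ Finset.range g,
              (fun m => ω ((a0 : ℕ) + 1) (p 1) * ω ((a : ℕ) + 1) (p m)
                - ω ((a : ℕ) + 1) (p 1) * ω ((a0 : ℕ) + 1) (p m)) (j + 1)
                * vn g ω p (j + 1) y = 0 := by
            intro y
            have ha := vn_row_rel g ω p hD a y
            have ha0 := vn_row_rel g ω p hD a0 y
            have expand : ∀ j ∈ Finset.range g,
                (ω ((a0 : ℕ) + 1) (p 1) * ω ((a : ℕ) + 1) (p (j + 1))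
                  - ω ((a : ℕ) + 1) (p 1) * ω ((a0 : ℕ) + 1) (p (j + 1)))
                  * vn g ω p (j + 1) y
                = ω ((a0 : ℕ) + 1) (p 1) * (ω ((a : ℕ) + 1) (p (j + 1)) * vn g ω p (j + 1) y)
                  - ω ((a : ℕ) + 1) (p 1)
                    * (ω ((a0 : ℕ) + 1) (p (j + 1)) * vn g ω p (j + 1) y) :=
              fun j _ => by ring
            rw [Finset.sum_congr rfl expand, Finset.sum_sub_distrib, ← Finset.mul_sum,
              ← Finset.mul_sum, ha, ha0, mul_zero, mul_zero, sub_zero]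
          have he1 : (fun m => ω ((a0 : ℕ) + 1) (p 1) * ω ((a : ℕ) + 1) (p m)
              - ω ((a : ℕ) + 1) (p 1) * ω ((a0 : ℕ) + 1) (p m)) 1 = 0 := by
            simp only []; ring
          have := hcase (fun m => ω ((a0 : ℕ) + 1) (p 1) * ω ((a : ℕ) + 1) (p m)
            - ω ((a : ℕ) + 1) (p 1) * ω ((a0 : ℕ) + 1) (p m)) he1 herel i (by omega) h2
          exact sub_eq_zero.mp this
      intro y
      rw [e1, vn_eq_cramer, Matrix.cramer_apply]
      by_cases hγ : ω ((a0 : ℕ) + 1) (p 2) = 0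
      · apply Matrix.det_eq_zero_of_column_eq_zero ⟨1, h1g⟩
        intro a
        rw [Matrix.updateCol_ne hne10]
        have h2 := hprop a 2 (by omega) (by omega)
        rw [hγ, mul_zero] at h2
        exact (mul_eq_zero.mp h2).resolve_left hβ
      · apply det_eq_zero_of_col_smul _ ⟨1, h1g⟩ ⟨2, h2g⟩ (by simp [Fin.ext_iff])
          (ω ((a0 : ℕ) + 1) (p 3) / ω ((a0 : ℕ) + 1) (p 2))
        intro a
        rw [Matrix.updateCol_ne hne10, Matrix.updateCol_ne hne20]
        have h2 := hprop a 2 (by omega) (by omega)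
        have h3 := hprop a 3 (by omega) (by omega)
        have key : ω ((a0 : ℕ) + 1) (p 2) * ω ((a : ℕ) + 1) (p 3)
            = ω ((a0 : ℕ) + 1) (p 3) * ω ((a : ℕ) + 1) (p 2) := by
          apply mul_left_cancel₀ hβ
          linear_combination ω ((a0 : ℕ) + 1) (p 2) * h3 - ω ((a0 : ℕ) + 1) (p 3) * h2
        show ω ((a : ℕ) + 1) (p 3)
          = ω ((a0 : ℕ) + 1) (p 3) / ω ((a0 : ℕ) + 1) (p 2) * ω ((a : ℕ) + 1) (p 2)
        field_simp
        linear_combination key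

lemma exists_rel (hg : 4 ≤ g)
    (hspan : Module.finrank ℂ (Submodule.span ℂ (prodSet g ω)) ≤ 3 * g - 3)
    (hk : 3 ≤ k) (hkl : k < l) (hl : l ≤ g) : RelStmt g ω p k l := by
  by_cases hD : (Apm g ω p).det = 0
  · exact relstmt_of_detzero g ω p k l hg hD
  · have hb : ∀ c : Fin (2 * g - 2),
        1 ≤ (colPair g k l ((c : ℕ) + 1)).1 ∧
        (colPair g k l ((c : ℕ) + 1)).1 < (colPair g k l ((c : ℕ) + 1)).2 ∧
        (colPair g k l ((c : ℕ) + 1)).2 ≤ g :=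
      fun c => colPair_bounds g k l ((c : ℕ) + 1) hg hk hkl hl (by omega)
        (by have := c.isLt; omega)
    have hmem : ∀ c : Fin (2 * g - 2),
        (fun y => vn g ω p (colPair g k l ((c : ℕ) + 1)).1 y *
                  vn g ω p (colPair g k l ((c : ℕ) + 1)).2 y)
          ∈ Submodule.span ℂ (prodSet g ω) := by
      intro c
      obtain ⟨h1, h2, h3⟩ := hb c
      have := vn_prod_mem g ω p ⟨(colPair g k l ((c : ℕ) + 1)).1 - 1, by omega⟩
        ⟨(colPair g k l ((c : ℕ) + 1)).2 - 1, by omega⟩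
      have e1 : (colPair g k l ((c : ℕ) + 1)).1 - 1 + 1 = (colPair g k l ((c : ℕ) + 1)).1 := by
        omega
      have e2 : (colPair g k l ((c : ℕ) + 1)).2 - 1 + 1 = (colPair g k l ((c : ℕ) + 1)).2 := by
        omega
      simpa only [Fin.val_mk, e1, e2] using this
    haveI : FiniteDimensional ℂ (Submodule.span ℂ (prodSet g ω)) :=
      FiniteDimensional.span_of_finite ℂ (prodSet_finite g ω)
    let u : Fin g ⊕ Fin (2 * g - 2) → (Submodule.span ℂ (prodSet g ω)) := Sum.elim
      (fun m => ⟨fun y => vn g ω p ((m : ℕ) + 1) y * vn g ω p ((m : ℕ) + 1) y,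
        vn_prod_mem g ω p m m⟩)
      (fun c => ⟨_, hmem c⟩)
    have hnli : ¬ LinearIndependent ℂ u := by
      intro hli
      have hcard := hli.fintype_card_le_finrank
      rw [Fintype.card_sum, Fintype.card_fin, Fintype.card_fin] at hcard
      omega
    obtain ⟨γ, hγsum, x0, hx0⟩ := Fintype.not_linearIndependent_iff.mp hnli
    have hfun : ∀ y : X,
        (∑ m : Fin g, γ (Sum.inl m) * (vn g ω p ((m : ℕ) + 1) y * vn g ω p ((m : ℕ) + 1) y)) +
        (∑ c : Fin (2 * g - 2), γ (Sum.inr c) *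
          (vn g ω p (colPair g k l ((c : ℕ) + 1)).1 y *
           vn g ω p (colPair g k l ((c : ℕ) + 1)).2 y)) = 0 := by
      intro y
      have h0 := congrArg (fun z : (Submodule.span ℂ (prodSet g ω)) => (z : X → ℂ) y) hγsum
      simpa only [Fintype.sum_sum_type, Submodule.coe_add, AddSubmonoidClass.coe_finset_sum,
        SetLike.val_smul, Finset.sum_apply, Pi.add_apply, Pi.smul_apply, smul_eq_mul,
        ZeroMemClass.coe_zero, Pi.zero_apply, Sum.elim_inl, Sum.elim_inr, u] using h0
    have hinl : ∀ m : Fin g, γ (Sum.inl m) = 0 := by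
      intro m
      have hmlt := m.isLt
      have h0 := hfun (p ((m : ℕ) + 1))
      have hz2 : ∀ c : Fin (2 * g - 2), γ (Sum.inr c) *
          (vn g ω p (colPair g k l ((c : ℕ) + 1)).1 (p ((m : ℕ) + 1)) *
           vn g ω p (colPair g k l ((c : ℕ) + 1)).2 (p ((m : ℕ) + 1))) = 0 := by
        intro c
        obtain ⟨h1, h2, h3⟩ := hb c
        rw [vn_apply_p g ω p h1 (by omega) (by omega) (by omega),
            vn_apply_p g ω p (by omega) h3 (by omega) (by omega)]
        split_ifs with hA hB
        · exfalso; omega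
        all_goals simp
      have hz1 : ∑ m' : Fin g, γ (Sum.inl m') *
          (vn g ω p ((m' : ℕ) + 1) (p ((m : ℕ) + 1)) *
           vn g ω p ((m' : ℕ) + 1) (p ((m : ℕ) + 1)))
          = γ (Sum.inl m) * ((Apm g ω p).det * (Apm g ω p).det) := by
        rw [Finset.sum_eq_single m]
        · rw [vn_apply_p g ω p (by omega) (by omega) (by omega) (by omega), if_pos rfl]
        · intro b _ hbm
          have hblt := b.isLt
          rw [vn_apply_p g ω p (by omega) (by omega) (by omega) (by omega),
            if_neg (by intro h; exact hbm (Fin.ext (by omega)))]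
          simp
        · intro h; exact absurd (Finset.mem_univ _) h
      rw [hz1, Finset.sum_eq_zero (fun c _ => hz2 c), add_zero] at h0
      rcases mul_eq_zero.mp h0 with h | h
      · exact h
      · exact absurd (mul_self_eq_zero.mp h) hD
    refine ⟨fun c => γ (Sum.inr c), ?_, ?_⟩
    · intro h0
      cases x0 with
      | inl m => exact hx0 (hinl m)
      | inr c => exact hx0 (congrFun h0 c)
    · intro y
      have h0 := hfun y
      rw [Finset.sum_eq_zero (fun m _ => by rw [hinl m, zero_mul]), zero_add] at h0
      exact h0

end ExistsRel2

end DetAProof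

/-- **Theorem 2.1.** If the span of the products `ω_i ω_j`, `1 ≤ i ≤ j ≤ g`, has
dimension at most `3g - 3`, then `det A(k,l) = 0` for all `3 ≤ k < l ≤ g`. -/
theorem detA_eq_zero {X : Type*} (g : ℕ) (hg : 4 ≤ g) (ω : ℕ → X → ℂ)
    (hspan : Module.finrank ℂ
      (Submodule.span ℂ {f : X → ℂ | ∃ i j, 1 ≤ i ∧ i ≤ j ∧ j ≤ g ∧
        f = fun z => ω i z * ω j z}) ≤ 3 * g - 3)
    (p q : ℕ → X) (k l : ℕ) (hk : 3 ≤ k) (hkl : k < l) (hl : l ≤ g) :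
    (Amat g ω p q k l).det = 0 := by
  obtain ⟨Λ, hΛ, hrel⟩ := DetAProof.exists_rel g ω p k l hg hspan hk hkl hl
  rw [← Matrix.exists_mulVec_eq_zero_iff]
  refine ⟨Λ, hΛ, ?_⟩
  funext r
  have h0 := hrel (q ((r : ℕ) + 1))
  simp only [DetAProof.vn] at h0
  simp only [Matrix.mulVec, dotProduct, Amat, Matrix.of_apply, aCoef, Pi.zero_apply]
  rw [← h0]
  exact Finset.sum_congr rfl fun c _ => by ring
end

section
/- Let g ≥ 4, let X be a set, and let ω₁,…,ω_g : X → ℂ be functions such that the ℂ-linear span of the pointwise products ω_i·ω_j (1 ≤ i ≤ j ≤ g) has dimension at most 3g−3. Fix points p₁,…,p_g ∈ X and q₁,…,q_{2g−2} ∈ X and a pair (k,l) with 3 ≤ k < l ≤ g. Then for every r ∈ {1,…,2g−2} and every z ∈ X, the relation Σ_{i,j=1}^g det A_{ij,r}(k,l) · ω_i(z) ω_j(z) = 0 holds. -/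
/-- On a 0-based index `a ∈ {0,…,g-2}`, the 1-based index obtained by skipping
the 1-based index `t` in `{1,…,g}`; used to delete a row/column. -/
def skipIdx (t a : ℕ) : ℕ := if a + 1 < t then a + 1 else a + 2

/-- The cofactor `D_{mn} = (-1)^{m+n} det_{i ≠ m, j ≠ n} ω_j(p_i)` (1-based `m,n`). -/
noncomputable def Dcof {X : Type*} (g : ℕ) (ω : ℕ → X → ℂ) (p : ℕ → X) (m n : ℕ) : ℂ :=
  (-1) ^ (m + n) *
    (Matrix.of fun a b : Fin (g - 1) =>
      ω (skipIdx n (b : ℕ)) (p (skipIdx m (a : ℕ)))).det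

/-- The matrix `A_{ij,r}(k,l)`, obtained from `A(k,l)` by replacing the `r`-th row
(1-based `r`) with the row whose entry in the column indexed by `(m,n)` is
`D_{mi} D_{nj}`. -/
noncomputable def AmatRepl {X : Type*} (g : ℕ) (ω : ℕ → X → ℂ) (p q : ℕ → X)
    (k l i j r : ℕ) : Matrix (Fin (2 * g - 2)) (Fin (2 * g - 2)) ℂ :=
  Matrix.of fun r' c =>
    if (r' : ℕ) + 1 = r then
      Dcof g ω p (colPair g k l ((c : ℕ) + 1)).1 i * Dcof g ω p (colPair g k l ((c : ℕ) + 1)).2 j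
    else
      aCoef g ω p q (colPair g k l ((c : ℕ) + 1)).1 (colPair g k l ((c : ℕ) + 1)).2 ((r' : ℕ) + 1)

/-!
Write `d_m(z) = det ω(p₁,…,p_{m-1},z,p_{m+1},…,p_g) = Σᵢ D_{mi} ω_i(z)`. The determinant is
linear in the replaced row, so the sum in the theorem is the determinant of `A(k,l)` with its
`r`-th row replaced by `(d_m(z) d_n(z))_{(m,n)}`. Every row of that matrix consists of values of
the same `2g-2` functions `d_m d_n`, so it is singular as soon as these functions are linearly
dependent.

If `det ω(p) ≠ 0`, then `d_m(p_s) = δ_{ms} det ω(p)`; evaluating at the `p_s` shows that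
independent products `d_m d_n` (with `m ≠ n`) would stay independent together with the `g` squares
`d_s²`, giving `3g-2` independent elements of the span of the `ω_iω_j`, which has dimension at
most `3g-3`. If `det ω(p) = 0`, the adjugate of `[ω_i(p_j)]` has rank at most one, so all `d_m`
are multiples of a single function and any two of the products are proportional.
-/

open Matrix Submodule Set Module

section LinearAlgebra

variable {K : Type*} [Field K]

namespace Matrix

variable {m n : Type*} [Fintype n]

theorem rank_updateRow_le [Fintype m] [DecidableEq m] (A : Matrix m n K) (j : m) (v : n → K) :
    (A.updateRow j v).rank ≤ A.rank + 1 := by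
  rw [rank_eq_finrank_span_row, rank_eq_finrank_span_row]
  set R := span K (range A.row)
  set L := span K {v}
  have hrows : span K (range (A.updateRow j v).row) ≤ R ⊔ L := by
    refine span_le.mpr ?_
    rintro _ ⟨i, rfl⟩
    rcases eq_or_ne i j with rfl | hij
    · change A.updateRow i v i ∈ _
      rw [updateRow_self]
      exact mem_sup_right (mem_span_singleton_self v)
    · change A.updateRow j v i ∈ _
      rw [updateRow_ne hij]
      exact mem_sup_left (subset_span ⟨i, rfl⟩)
  have hL : finrank K L ≤ 1 := (finrank_span_le_card ({v} : Set (n → K))).trans (by simp)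
  have := finrank_add_le_finrank_add_finrank R L
  have := Submodule.finrank_mono hrows
  omega

variable [DecidableEq n]

theorem det_updateRow_finset_sum {R β : Type*} [CommRing R] (A : Matrix n n R) (j : n)
    (s : Finset β) (u : β → n → R) :
    (A.updateRow j (∑ i ∈ s, u i)).det = ∑ i ∈ s, (A.updateRow j (u i)).det := by
  have hL : ∀ v, (A.updateRow j v).det =
      (detRowAlternating : (n → R) [⋀^n]→ₗ[R] R).toMultilinearMap.toLinearMap A j v :=
    fun _ => rfl
  simp only [hL, map_sum]

theorem adjugate_eq_zero_of_rank_add_two_le {A : Matrix n n K}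
    (hA : A.rank + 2 ≤ Fintype.card n) : A.adjugate = 0 := by
  ext i j
  rw [adjugate_apply, zero_apply]
  by_contra h
  have := rank_of_det_ne_zero h
  have := rank_updateRow_le A j (Pi.single i 1)
  omega

theorem rank_adjugate_le_one_of_det_eq_zero {A : Matrix n n K} (h : A.det = 0) :
    A.adjugate.rank ≤ 1 := by
  by_cases hA : A.rank + 2 ≤ Fintype.card n
  · simp [adjugate_eq_zero_of_rank_add_two_le hA]
  · have := rank_add_rank_le_card_of_mul_eq_zero
      (show A * A.adjugate = 0 by rw [mul_adjugate, h, zero_smul])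
    omega

theorem exists_adjugate_eq_smul_of_det_eq_zero {A : Matrix n n K} (h : A.det = 0) :
    ∃ c v : n → K, ∀ i, A.adjugate i = c i • v := by
  have hrank := rank_adjugate_le_one_of_det_eq_zero h
  rw [rank_eq_finrank_span_row, finrank_le_one_iff] at hrank
  obtain ⟨v, hv⟩ := hrank
  choose c hc using fun i => hv ⟨A.adjugate i, subset_span ⟨i, rfl⟩⟩
  exact ⟨c, v, fun i => by simpa using (congrArg Subtype.val (hc i)).symm⟩

theorem det_eval_eq_zero_of_not_linearIndependent {X : Type*} {f : n → X → K}
    (hf : ¬ LinearIndependent K f) (y : n → X) :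
    (of fun r c => f c (y r)).det = 0 := by
  obtain ⟨lam, hlam, c, hc⟩ := Fintype.not_linearIndependent_iff.mp hf
  refine exists_mulVec_eq_zero_iff.mp ⟨lam, fun h => hc (congrFun h c), ?_⟩
  ext r
  simpa [mulVec, dotProduct, mul_comm] using congrFun hlam (y r)

end Matrix

theorem LinearIndependent.fintype_card_le_finrank_of_mem {κ V : Type*} [AddCommGroup V]
    [Module K V] [Fintype κ] {v : κ → V} (hv : LinearIndependent K v) {S : Submodule K V}
    [FiniteDimensional K S] (hS : ∀ t, v t ∈ S) : Fintype.card κ ≤ finrank K S := by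
  have h1 := linearIndependent_iff_card_eq_finrank_span.mp hv
  have h2 := Submodule.finrank_mono (span_le.mpr (range_subset_iff.mpr hS))
  unfold Set.finrank at h1
  omega

section Cofactor

variable {X ι : Type*} [Fintype ι] [DecidableEq ι] (ω : ι → X → K) (p : ι → X)

def evalMatrix : Matrix ι ι K := Matrix.of fun a b => ω a (p b)

/-- The paper's `det ω(p₁,…,p_{m-1},z,p_{m+1},…,p_g)` as a function of `z`. -/
def cofactorFun (m : ι) (z : X) : K := ((evalMatrix ω p).updateCol m fun a => ω a z).det

theorem cofactorFun_eq_sum (m : ι) (z : X) :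
    cofactorFun ω p m z = ∑ i, (evalMatrix ω p).adjugate m i * ω i z := by
  rw [cofactorFun, ← cramer_apply, cramer_eq_adjugate_mulVec]
  rfl

theorem cofactorFun_apply_point (m s : ι) :
    cofactorFun ω p m (p s) = (Pi.single s (evalMatrix ω p).det : ι → K) m := by
  rw [cofactorFun, ← cramer_apply]
  exact congrFun (cramer_row_self _ _ s fun _ => rfl) m

theorem cofactorFun_mul_mem_span (m m' : ι) :
    cofactorFun ω p m * cofactorFun ω p m' ∈
      span K (range fun ij : ι × ι => ω ij.1 * ω ij.2) := by
  have hexp : cofactorFun ω p m * cofactorFun ω p m' = ∑ ij : ι × ι,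
      ((evalMatrix ω p).adjugate m ij.1 * (evalMatrix ω p).adjugate m' ij.2) •
        (ω ij.1 * ω ij.2) := by
    ext z
    simp only [Pi.mul_apply, cofactorFun_eq_sum, Finset.sum_mul_sum, Finset.sum_apply,
      Pi.smul_apply, smul_eq_mul, Fintype.sum_prod_type]
    exact Finset.sum_congr rfl fun i _ => Finset.sum_congr rfl fun j _ => by ring
  rw [hexp]
  exact sum_mem fun ij _ => smul_mem _ _ (subset_span ⟨ij, rfl⟩)

theorem exists_cofactorFun_eq_smul_of_det_eq_zero (h : (evalMatrix ω p).det = 0) :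
    ∃ (c : ι → K) (f : X → K), ∀ m, cofactorFun ω p m = c m • f := by
  obtain ⟨c, v, hv⟩ := exists_adjugate_eq_smul_of_det_eq_zero h
  refine ⟨c, fun z => ∑ i, v i * ω i z, fun m => ?_⟩
  ext z
  simp [cofactorFun_eq_sum, hv, Finset.mul_sum, mul_assoc]

theorem cofactorFun_mul_cofactorFun_apply_point {m m' : ι} (h : m ≠ m') (s : ι) :
    cofactorFun ω p m (p s) * cofactorFun ω p m' (p s) = 0 := by
  by_cases hm : m = s
  · simp [cofactorFun_apply_point, show m' ≠ s from hm ▸ h.symm]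
  · simp [cofactorFun_apply_point, hm]

variable {κ : Type*} [Fintype κ] (a b : κ → ι)

theorem not_linearIndependent_cofactorFun_mul_of_det_eq_zero (h : (evalMatrix ω p).det = 0)
    (hκ : 2 ≤ Fintype.card κ) :
    ¬ LinearIndependent K fun c => cofactorFun ω p (a c) * cofactorFun ω p (b c) := by
  obtain ⟨c, f, hf⟩ := exists_cofactorFun_eq_smul_of_det_eq_zero ω p h
  intro hli
  have hcard := hli.fintype_card_le_finrank_of_mem (S := K ∙ (f * f)) fun t =>
    mem_span_singleton.mpr ⟨c (a t) * c (b t), by rw [hf, hf, smul_mul_smul_comm]⟩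
  have : finrank K (K ∙ (f * f)) ≤ 1 :=
    (finrank_span_le_card ({f * f} : Set (X → K))).trans (by simp)
  omega

theorem not_linearIndependent_cofactorFun_mul_of_det_ne_zero (h : (evalMatrix ω p).det ≠ 0)
    (hab : ∀ c, a c ≠ b c)
    (hdim : finrank K (span K (range fun ij : ι × ι => ω ij.1 * ω ij.2)) <
      Fintype.card κ + Fintype.card ι) :
    ¬ LinearIndependent K fun c => cofactorFun ω p (a c) * cofactorFun ω p (b c) := by
  intro hli
  have hsum : LinearIndependent K <| Sum.elim
      (fun c => cofactorFun ω p (a c) * cofactorFun ω p (b c))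
      (fun s => cofactorFun ω p s * cofactorFun ω p s) := by
    rw [Fintype.linearIndependent_iff]
    intro g hg
    have hsq : ∀ s, g (.inr s) = 0 := by
      intro s
      have hgs := congrFun hg (p s)
      simp only [Fintype.sum_sum_type, Sum.elim_inl, Sum.elim_inr, Finset.sum_apply,
        Pi.smul_apply, Pi.mul_apply, smul_eq_mul,
        cofactorFun_mul_cofactorFun_apply_point _ _ (hab _), mul_zero, Finset.sum_const_zero,
        zero_add, Pi.zero_apply] at hgs
      simpa [cofactorFun_apply_point, Pi.single_apply, h] using hgs
    have hprod : ∀ c, g (.inl c) = 0 := Fintype.linearIndependent_iff.mp hli _ <| by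
      simpa [Fintype.sum_sum_type, hsq] using hg
    rintro (c | s)
    exacts [hprod c, hsq s]
  have : FiniteDimensional K (span K (range fun ij : ι × ι => ω ij.1 * ω ij.2)) :=
    .span_of_finite K (finite_range _)
  have := hsum.fintype_card_le_finrank_of_mem (S := span K _) <| by
    rintro (c | s) <;> exact cofactorFun_mul_mem_span ω p _ _
  simp only [Fintype.card_sum] at this
  omega

theorem not_linearIndependent_cofactorFun_mul (hab : ∀ c, a c ≠ b c)
    (hκ : 2 ≤ Fintype.card κ)
    (hdim : finrank K (span K (range fun ij : ι × ι => ω ij.1 * ω ij.2)) <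
      Fintype.card κ + Fintype.card ι) :
    ¬ LinearIndependent K fun c => cofactorFun ω p (a c) * cofactorFun ω p (b c) := by
  by_cases h : (evalMatrix ω p).det = 0
  · exact not_linearIndependent_cofactorFun_mul_of_det_eq_zero ω p a b h hκ
  · exact not_linearIndependent_cofactorFun_mul_of_det_ne_zero ω p a b h hab hdim

end Cofactor

end LinearAlgebra

section OneBased

variable {X : Type*}

def oneBased {α : Type*} (g : ℕ) (f : ℕ → α) : Fin g → α := fun a => f ((a : ℕ) + 1)

theorem Finset.sum_Icc_one_eq_sum_fin {M : Type*} [AddCommMonoid M] (g : ℕ) (f : ℕ → M) :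
    ∑ i ∈ Finset.Icc 1 g, f i = ∑ i : Fin g, f ((i : ℕ) + 1) := by
  rw [Fin.sum_univ_eq_sum_range (fun i => f (i + 1)), Finset.range_eq_Ico, Finset.sum_Ico_add',
    zero_add, Finset.Ico_add_one_right_eq_Icc]

theorem detOm_updPt (g : ℕ) (ω : ℕ → X → ℂ) (p : ℕ → X) (m : Fin g) (z : X) :
    detOm g ω (updPt p ((m : ℕ) + 1) z) = cofactorFun (oneBased g ω) (oneBased g p) m z := by
  unfold detOm cofactorFun evalMatrix
  congr 1
  ext a b
  by_cases h : b = m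
  · simp [h, updPt, oneBased]
  · simp [h, updPt, oneBased, Fin.val_inj]

theorem skipIdx_succ {n : ℕ} (i : Fin (n + 1)) (b : Fin n) :
    skipIdx ((i : ℕ) + 1) b = (i.succAbove b : ℕ) + 1 := by
  unfold skipIdx Fin.succAbove
  split_ifs with h₁ h₂ <;> simp only [Fin.lt_def, Fin.val_castSucc, Fin.val_succ] at * <;> omega

theorem Dcof_eq_adjugate {n : ℕ} (ω : ℕ → X → ℂ) (p : ℕ → X) (m i : Fin (n + 1)) :
    Dcof (n + 1) ω p ((m : ℕ) + 1) ((i : ℕ) + 1) =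
      (evalMatrix (oneBased (n + 1) ω) (oneBased (n + 1) p)).adjugate m i := by
  rw [adjugate_fin_succ_eq_det_submatrix, Dcof, ← det_transpose]
  congr 1
  · ring
  · congr 1
    ext a b
    simp [evalMatrix, oneBased, skipIdx_succ]

theorem sum_Dcof_mul (g : ℕ) (ω : ℕ → X → ℂ) (p : ℕ → X) (m : Fin g) (z : X) :
    ∑ i ∈ Finset.Icc 1 g, Dcof g ω p ((m : ℕ) + 1) i * ω i z =
      cofactorFun (oneBased g ω) (oneBased g p) m z := by
  obtain ⟨n, rfl⟩ := Nat.exists_eq_succ_of_ne_zero m.pos.ne'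
  rw [Finset.sum_Icc_one_eq_sum_fin, cofactorFun_eq_sum]
  simp [Dcof_eq_adjugate, oneBased]

end OneBased

section Relations

variable {X : Type*}

theorem span_products_eq_span_range (g : ℕ) (ω : ℕ → X → ℂ) :
    span ℂ {f : X → ℂ | ∃ i j, 1 ≤ i ∧ i ≤ j ∧ j ≤ g ∧
        f = fun z => ω i z * ω j z} =
      span ℂ (range fun ij : Fin g × Fin g => oneBased g ω ij.1 * oneBased g ω ij.2) := by
  apply le_antisymm <;> rw [span_le]
  · rintro _ ⟨i, j, hi, hij, hj, rfl⟩
    refine subset_span ⟨(⟨i - 1, by omega⟩, ⟨j - 1, by omega⟩), ?_⟩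
    funext z
    simp only [oneBased, Pi.mul_apply, Nat.sub_add_cancel hi, Nat.sub_add_cancel (hi.trans hij)]
  · rintro _ ⟨⟨a, b⟩, rfl⟩
    rcases le_total a b with h | h
    · exact subset_span ⟨a + 1, b + 1, by omega, by simpa using h, by omega, rfl⟩
    · exact subset_span ⟨b + 1, a + 1, by omega, by simpa using h, by omega,
        funext fun z => mul_comm _ _⟩

theorem exists_colPair_eq {g k l : ℕ} (hk : 1 ≤ k) (hkl : k < l) (hl : l ≤ g)
    (c : Fin (2 * g - 2)) :
    ∃ a b : Fin g, a ≠ b ∧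
      colPair g k l ((c : ℕ) + 1) = ((a : ℕ) + 1, (b : ℕ) + 1) := by
  have := c.isLt
  unfold colPair
  split_ifs with h₁ h₂
  · exact ⟨⟨0, by omega⟩, ⟨c + 1, by omega⟩, Fin.ne_of_val_ne (by simp), rfl⟩
  · exact ⟨⟨1, by omega⟩, ⟨c + 1 - g + 2, by omega⟩, Fin.ne_of_val_ne (by simp only; omega),
      rfl⟩
  · exact ⟨⟨k - 1, by omega⟩, ⟨l - 1, by omega⟩, Fin.ne_of_val_ne (by simp only; omega),
      by simp only [Prod.mk.injEq]; omega⟩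

theorem sum_det_AmatRepl_mul (g : ℕ) (ω : ℕ → X → ℂ) (p q : ℕ → X) (k l : ℕ)
    (a b : Fin (2 * g - 2) → Fin g)
    (hab : ∀ c : Fin (2 * g - 2),
      colPair g k l ((c : ℕ) + 1) = ((a c : ℕ) + 1, (b c : ℕ) + 1))
    (r : Fin (2 * g - 2)) (z : X) :
    ∑ i ∈ Finset.Icc 1 g, ∑ j ∈ Finset.Icc 1 g,
        (AmatRepl g ω p q k l i j (r + 1)).det * (ω i z * ω j z) =
      (of fun r' c => cofactorFun (oneBased g ω) (oneBased g p) (a c)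
        (Function.update (oneBased (2 * g - 2) q) r z r') *
        cofactorFun (oneBased g ω) (oneBased g p) (b c)
        (Function.update (oneBased (2 * g - 2) q) r z r')).det := by
  set d := cofactorFun (oneBased g ω) (oneBased g p)
  set B : Matrix (Fin (2 * g - 2)) (Fin (2 * g - 2)) ℂ :=
    of fun r' c => d (a c) (q (r' + 1)) * d (b c) (q (r' + 1))
  set u : ℕ → ℕ → Fin (2 * g - 2) → ℂ := fun i j c =>
    Dcof g ω p (a c + 1) i * Dcof g ω p (b c + 1) j
  have hA : ∀ i j, AmatRepl g ω p q k l i j (r + 1) = B.updateRow r (u i j) := by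
    intro i j
    ext r' c
    by_cases h : r' = r
    · simp [AmatRepl, h, u, hab]
    · simp [AmatRepl, h, B, hab, aCoef, detOm_updPt, d, Fin.val_inj]
  have hrow : ∑ i ∈ Finset.Icc 1 g, ∑ j ∈ Finset.Icc 1 g, (ω i z * ω j z) • u i j =
      fun c => d (a c) z * d (b c) z := by
    funext c
    simp only [Finset.sum_apply, Pi.smul_apply, smul_eq_mul, u, d, ← sum_Dcof_mul,
      Finset.sum_mul_sum]
    exact Finset.sum_congr rfl fun i _ => Finset.sum_congr rfl fun j _ => by ring
  calc _ = ∑ i ∈ Finset.Icc 1 g, ∑ j ∈ Finset.Icc 1 g,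
        (B.updateRow r ((ω i z * ω j z) • u i j)).det := by
        simp only [hA, det_updateRow_smul, mul_comm]
    _ = (B.updateRow r fun c => d (a c) z * d (b c) z).det := by
        simp only [← hrow, det_updateRow_finset_sum]
    _ = _ := by
        congr 1
        ext r' c
        by_cases h : r' = r
        · simp [h]
        · simp [h, B, oneBased]

end Relations

theorem relations_on_products_general {X : Type*} (g : ℕ) (ω : ℕ → X → ℂ)
    (hspan : Module.finrank ℂ
      (Submodule.span ℂ {f : X → ℂ | ∃ i j, 1 ≤ i ∧ i ≤ j ∧ j ≤ g ∧
        f = fun z => ω i z * ω j z}) ≤ 3 * g - 3)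
    (p q : ℕ → X) (k l : ℕ) (hk : 3 ≤ k) (hkl : k < l) (hl : l ≤ g) :
    ∀ r ∈ Finset.Icc 1 (2 * g - 2), ∀ z : X,
      ∑ i ∈ Finset.Icc 1 g, ∑ j ∈ Finset.Icc 1 g,
        (AmatRepl g ω p q k l i j r).det * (ω i z * ω j z) = 0 := by
  intro r hr z
  obtain ⟨hr₁, hr₂⟩ := Finset.mem_Icc.mp hr
  obtain ⟨r, rfl⟩ : ∃ r' : Fin (2 * g - 2), r = r' + 1 :=
    ⟨⟨r - 1, by omega⟩, (Nat.sub_add_cancel hr₁).symm⟩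
  choose a b hab hcol using exists_colPair_eq (by omega) hkl hl
  have hdep := not_linearIndependent_cofactorFun_mul (oneBased g ω) (oneBased g p) a b hab
    (by rw [Fintype.card_fin]; omega)
    (by rw [← span_products_eq_span_range, Fintype.card_fin, Fintype.card_fin]; omega)
  rw [sum_det_AmatRepl_mul g ω p q k l a b hcol]
  exact det_eval_eq_zero_of_not_linearIndependent hdep _

/-- **Corollary 2.2** (undivided form). For every `r ∈ {1,…,2g-2}` and every `z`,
`∑_{i,j=1}^g det A_{ij,r}(k,l) ⬝ ω_i(z) ω_j(z) = 0`. -/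
theorem relations_on_products {X : Type*} (g : ℕ) (hg : 4 ≤ g) (ω : ℕ → X → ℂ)
    (hspan : Module.finrank ℂ
      (Submodule.span ℂ {f : X → ℂ | ∃ i j, 1 ≤ i ∧ i ≤ j ∧ j ≤ g ∧
        f = fun z => ω i z * ω j z}) ≤ 3 * g - 3)
    (p q : ℕ → X) (k l : ℕ) (hk : 3 ≤ k) (hkl : k < l) (hl : l ≤ g) :
    ∀ r ∈ Finset.Icc 1 (2 * g - 2), ∀ z : X,
      ∑ i ∈ Finset.Icc 1 g, ∑ j ∈ Finset.Icc 1 g,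
        (AmatRepl g ω p q k l i j r).det * (ω i z * ω j z) = 0 :=
  relations_on_products_general g ω hspan p q k l hk hkl hl
end

section
/- Let g ≥ 1, M := g(g+1)/2, and fix the pair-enumeration k ↦ (𝔣₁(k),𝔣₂(k)) of {1,…,M} onto {(i,j) : 1 ≤ i ≤ j ≤ g}. Let Y be an invertible symmetric g×g complex matrix and let A and B be symmetric g×g complex matrices. Then Tr(Y⁻¹ A Y⁻¹ B) = Σ_{m,n=1}^M (2 − δ_{𝔣₁(n)𝔣₂(n)}) · ((Y⁻¹ Y⁻¹))_{nm} · A_m · B_n. -/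
/-- The list of pairs `(i,j)`, `0 ≤ i ≤ j < g` (0-based), in the order
`(1,1),…,(g,g),(1,2),…,(1,g),(2,3),…,(2,g),…,(g-1,g)` of the paper. -/
def pairList (g : ℕ) : List (ℕ × ℕ) :=
  ((List.range g).map fun i => (i, i)) ++
    (List.range g).flatMap fun i =>
      ((List.range g).filter fun j => i < j).map fun j => (i, j)

/-- The pair-enumeration `k ↦ (𝔣₁(k), 𝔣₂(k))` of `{0,…,M-1}`, `M = g(g+1)/2`,
onto the pairs `(i,j)` with `0 ≤ i ≤ j < g`, as a pair of elements of `Fin g`. -/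
def pfin (g : ℕ) (hg : 0 < g) (k : ℕ) : Fin g × Fin g :=
  (⟨((pairList g).getD k (0, 0)).1 % g, Nat.mod_lt _ hg⟩,
   ⟨((pairList g).getD k (0, 0)).2 % g, Nat.mod_lt _ hg⟩)

/-- The doubled-index construction
`(AA)_{kl} = (A_{𝔣₁(k)𝔣₁(l)} A_{𝔣₂(k)𝔣₂(l)} + A_{𝔣₁(k)𝔣₂(l)} A_{𝔣₂(k)𝔣₁(l)}) / (1 + δ_{𝔣₁(l)𝔣₂(l)})`. -/
noncomputable def ddMat {g : ℕ} (hg : 0 < g) (A : Matrix (Fin g) (Fin g) ℂ)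
    (k l : ℕ) : ℂ :=
  (A (pfin g hg k).1 (pfin g hg l).1 * A (pfin g hg k).2 (pfin g hg l).2 +
      A (pfin g hg k).1 (pfin g hg l).2 * A (pfin g hg k).2 (pfin g hg l).1) /
    (1 + if (pfin g hg l).1 = (pfin g hg l).2 then (1 : ℂ) else 0)

/-!
Expanding the trace, `Tr(W A W B) = ∑_{(k,l)} ∑_{(i,j)} W_{ki} W_{lj} A_{ij} B_{kl}` over all
ordered pairs. A sum over all pairs folds onto the pairs `i ≤ j`: a swap-invariant summand picks
up the weight `2 - δ`, and symmetrising a general summand `f` turns it into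
`(f p + f p.swap) / (1 + δ)`. Folding the `(i,j)`-sum the second way (using `Aᵀ = A`) and then
the `(k,l)`-sum the first way (using `Bᵀ = B`) produces exactly the coefficients
`(2 - δ) (WW)_{nm}` with `W = Y⁻¹`; finally `pfin` enumerates the pairs `i ≤ j` bijectively on
`range M`.
-/

open Finset

section UpperPairs

def upperPairs (ι : Type*) [Fintype ι] [LinearOrder ι] : Finset (ι × ι) :=
  univ.filter fun p => p.1 ≤ p.2

variable {ι : Type*} [Fintype ι] [LinearOrder ι]

theorem mem_upperPairs {p : ι × ι} : p ∈ upperPairs ι ↔ p.1 ≤ p.2 := by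
  simp [upperPairs]

theorem sum_eq_sum_upperPairs_of_swap {R : Type*} [CommRing R] (f : ι × ι → R)
    (hf : ∀ p, f p.swap = f p) :
    ∑ p, f p = ∑ p ∈ upperPairs ι, (2 - if p.1 = p.2 then (1 : R) else 0) * f p := by
  have hlower : ∑ p : ι × ι, (if p.2 < p.1 then f p else 0) =
      ∑ p : ι × ι, (if p.1 < p.2 then f p else 0) :=
    Fintype.sum_equiv (Equiv.prodComm ι ι) _ _ fun p => by simp [hf]
  calc ∑ p, f p
      = ∑ p : ι × ι, ((if p.1 ≤ p.2 then f p else 0) + if p.2 < p.1 then f p else 0) := by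
        refine sum_congr rfl fun p _ => ?_
        by_cases h : p.1 ≤ p.2 <;> simp [h, not_le.mp]
    _ = ∑ p : ι × ι, ((if p.1 ≤ p.2 then f p else 0) + if p.1 < p.2 then f p else 0) := by
        rw [sum_add_distrib, sum_add_distrib, hlower]
    _ = ∑ p : ι × ι, if p.1 ≤ p.2 then (2 - if p.1 = p.2 then (1 : R) else 0) * f p else 0 := by
        refine sum_congr rfl fun p _ => ?_
        rcases lt_trichotomy p.1 p.2 with h | h | h
        · simp [h.le, h, h.ne]; ring
        · simp [h]; ring
        · simp [h.not_ge, h.not_gt]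
    _ = _ := by rw [upperPairs, sum_filter]

theorem sum_eq_sum_upperPairs_div {K : Type*} [Field K] [NeZero (2 : K)] (f : ι × ι → K) :
    ∑ p, f p = ∑ p ∈ upperPairs ι, (f p + f p.swap) / (1 + if p.1 = p.2 then (1 : K) else 0) := by
  have hsymm := sum_eq_sum_upperPairs_of_swap (fun p => f p + f p.swap) fun p => add_comm _ _
  calc ∑ p, f p = (∑ p, (f p + f p.swap)) / 2 := by
        rw [sum_add_distrib, Fintype.sum_equiv (Equiv.prodComm ι ι) (fun p => f p.swap) f fun _ => rfl,
          add_self_div_two]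
    _ = _ := by
        rw [hsymm, sum_div]
        refine sum_congr rfl fun p _ => ?_
        by_cases h : p.1 = p.2
        · simp only [h, if_true]; ring
        · simp only [h, if_false, sub_zero, add_zero, div_one]
          exact mul_div_cancel_left₀ _ two_ne_zero

end UpperPairs

theorem Matrix.trace_mul_mul_mul_eq_sum_upperPairs {ι K : Type*} [Fintype ι] [LinearOrder ι]
    [Field K] [NeZero (2 : K)] {W A B : Matrix ι ι K}
    (hW : W.IsSymm) (hA : A.IsSymm) (hB : B.IsSymm) :
    (W * A * W * B).trace =
      ∑ p ∈ upperPairs ι, ∑ q ∈ upperPairs ι,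
        (2 - if q.1 = q.2 then (1 : K) else 0) *
          ((W q.1 p.1 * W q.2 p.2 + W q.1 p.2 * W q.2 p.1) /
            (1 + if p.1 = p.2 then (1 : K) else 0)) *
          A p.1 p.2 * B q.1 q.2 := by
  set G : ι × ι → ι × ι → K := fun q p =>
    (W q.1 p.1 * W q.2 p.2 + W q.1 p.2 * W q.2 p.1) * A p.1 p.2 * B q.1 q.2 /
      (1 + if p.1 = p.2 then (1 : K) else 0) with hG
  have expand : (W * A * W * B).trace =
      ∑ q : ι × ι, ∑ p : ι × ι, W q.1 p.1 * W q.2 p.2 * A p.1 p.2 * B q.1 q.2 := by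
    simp only [Matrix.trace, Matrix.diag, Matrix.mul_apply, Fintype.sum_prod_type, sum_mul]
    refine sum_congr rfl fun k _ => sum_congr rfl fun l _ => ?_
    rw [sum_comm]
    refine sum_congr rfl fun i _ => sum_congr rfl fun j _ => ?_
    rw [hW.apply l j, hB.apply k l]
    ring
  calc (W * A * W * B).trace
      = ∑ q : ι × ι, ∑ p ∈ upperPairs ι, G q p := by
        rw [expand]
        refine sum_congr rfl fun q _ => ?_
        rw [sum_eq_sum_upperPairs_div]
        refine sum_congr rfl fun p _ => ?_
        rw [hG, Prod.fst_swap, Prod.snd_swap, hA.apply p.1 p.2]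
        ring
    _ = ∑ p ∈ upperPairs ι, ∑ q : ι × ι, G q p := sum_comm
    _ = ∑ p ∈ upperPairs ι, ∑ q ∈ upperPairs ι,
          (2 - if q.1 = q.2 then (1 : K) else 0) * G q p := by
        refine sum_congr rfl fun p _ => sum_eq_sum_upperPairs_of_swap (G · p) fun q => ?_
        simp only [hG, Prod.fst_swap, Prod.snd_swap, hB.apply q.1 q.2]
        ring
    _ = _ := by
        refine sum_congr rfl fun p _ => sum_congr rfl fun q _ => ?_
        rw [hG]
        ring

theorem mem_pairList {g : ℕ} {p : ℕ × ℕ} : p ∈ pairList g ↔ p.1 ≤ p.2 ∧ p.2 < g := by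
  obtain ⟨a, b⟩ := p
  simp only [pairList, List.mem_append, List.mem_map, List.mem_flatMap, List.mem_filter,
    List.mem_range, Prod.mk.injEq, decide_eq_true_eq]
  constructor
  · rintro (⟨i, hi, rfl, rfl⟩ | ⟨i, hi, j, ⟨hj, hij⟩, rfl, rfl⟩) <;> omega
  · rintro ⟨hab, hb⟩
    rcases hab.lt_or_eq with h | rfl
    · exact Or.inr ⟨a, by omega, b, ⟨hb, h⟩, rfl, rfl⟩
    · exact Or.inl ⟨a, hb, rfl, rfl⟩

theorem nodup_pairList (g : ℕ) : (pairList g).Nodup := by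
  refine List.Nodup.append ?_ ?_ fun p hdiag hoff => ?_
  · exact List.nodup_range.map fun i j h => congrArg Prod.fst h
  · refine List.nodup_flatMap.mpr ⟨fun i _ => ?_, List.nodup_range.imp fun hij p hp hq => ?_⟩
    · exact (List.nodup_range.filter _).map fun j k h => congrArg Prod.snd h
    · simp only [List.mem_map] at hp hq
      obtain ⟨_, _, rfl⟩ := hp
      obtain ⟨_, _, h⟩ := hq
      exact hij (congrArg Prod.fst h).symm
  · simp only [List.mem_map, List.mem_flatMap, List.mem_filter, decide_eq_true_eq] at hdiag hoff
    obtain ⟨i, _, rfl⟩ := hdiag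
    obtain ⟨_, _, _, ⟨_, _⟩, h⟩ := hoff
    simp only [Prod.mk.injEq] at h
    omega

theorem length_filter_lt_range (g i : ℕ) :
    ((List.range g).filter fun j => i < j).length = g - (i + 1) := by
  induction g with
  | zero => simp
  | succ n ih =>
    rw [List.range_succ, List.filter_append, List.length_append, ih]
    by_cases h : i < n <;> simp [h] <;> omega

theorem length_pairList (g : ℕ) : (pairList g).length = g * (g + 1) / 2 := by
  have hoff : ∑ i ∈ range g, (g - (i + 1)) = g * (g - 1) / 2 := by
    rw [← sum_range_id, ← sum_range_reflect]
    refine sum_congr rfl fun i hi => ?_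
    rw [mem_range] at hi
    omega
  have hlen : (pairList g).length = g + ∑ i ∈ range g, (g - (i + 1)) := by
    simp [pairList, length_filter_lt_range, Finset.sum, Finset.range, Multiset.range]
  rw [hlen, hoff]
  rcases g with _ | g
  · rfl
  · rw [Nat.add_sub_cancel, show (g + 1) * (g + 1 + 1) = (g + 1) * g + 2 * (g + 1) by ring]
    omega

theorem val_pfin {g : ℕ} (hg : 0 < g) {k : ℕ} (hk : k < (pairList g).length) :
    Prod.map Fin.val Fin.val (pfin g hg k) = (pairList g)[k] := by
  have hmem := mem_pairList.mp (List.getElem_mem hk)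
  simp only [pfin, List.getD_eq_getElem _ _ hk, Prod.map]
  rw [Nat.mod_eq_of_lt (by omega), Nat.mod_eq_of_lt hmem.2]

theorem sum_range_pfin {g : ℕ} (hg : 0 < g) {M : Type*} [AddCommMonoid M]
    (F : Fin g × Fin g → M) :
    ∑ k ∈ range (g * (g + 1) / 2), F (pfin g hg k) = ∑ p ∈ upperPairs (Fin g), F p := by
  have hval_inj : Function.Injective (Prod.map (Fin.val (n := g)) (Fin.val (n := g))) :=
    Fin.val_injective.prodMap Fin.val_injective
  rw [← length_pairList]
  refine sum_nbij (pfin g hg) (fun k hk => ?_) (fun k hk l hl hkl => ?_) (fun p hp => ?_)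
    fun _ _ => rfl
  · rw [mem_range] at hk
    have hmem := mem_pairList.mp (List.getElem_mem hk)
    rw [← val_pfin hg hk] at hmem
    exact mem_upperPairs.mpr (Fin.le_def.mpr hmem.1)
  · rw [mem_coe, mem_range] at hk hl
    rw [← (nodup_pairList g).getElem_inj_iff (hi := hk) (hj := hl), ← val_pfin hg hk,
      ← val_pfin hg hl, hkl]
  · have hmem : Prod.map Fin.val Fin.val p ∈ pairList g :=
      mem_pairList.mpr ⟨Fin.le_def.mp (mem_upperPairs.mp hp), p.2.isLt⟩
    obtain ⟨k, hk, hkp⟩ := List.mem_iff_getElem.mp hmem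
    exact ⟨k, mem_range.mpr hk, hval_inj (by rw [val_pfin hg hk, hkp])⟩

theorem siegel_metric_pair_indices_general (g : ℕ) (hg : 0 < g)
    (Y A B : Matrix (Fin g) (Fin g) ℂ)
    (hYs : Y.IsSymm) (hAs : A.IsSymm) (hBs : B.IsSymm) :
    Matrix.trace (Y⁻¹ * A * Y⁻¹ * B) =
      ∑ m ∈ Finset.range (g * (g + 1) / 2), ∑ n ∈ Finset.range (g * (g + 1) / 2),
        (2 - if (pfin g hg n).1 = (pfin g hg n).2 then (1 : ℂ) else 0) *
          ddMat hg Y⁻¹ n m *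
          A (pfin g hg m).1 (pfin g hg m).2 *
          B (pfin g hg n).1 (pfin g hg n).2 := by
  rw [Matrix.trace_mul_mul_mul_eq_sum_upperPairs hYs.inv hAs hBs, ← sum_range_pfin hg]
  exact sum_congr rfl fun m _ => (sum_range_pfin hg _).symm

/-- **Proposition 5.1**: for `Y` invertible symmetric and `A`, `B` symmetric,
`Tr(Y⁻¹ A Y⁻¹ B) = ∑_{m,n=1}^M (2 - δ_{𝔣₁(n)𝔣₂(n)}) (Y⁻¹Y⁻¹)_{nm} A_m B_n`. -/
theorem siegel_metric_pair_indices (g : ℕ) (hg : 0 < g)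
    (Y A B : Matrix (Fin g) (Fin g) ℂ) (hY : IsUnit Y.det)
    (hYs : Y.IsSymm) (hAs : A.IsSymm) (hBs : B.IsSymm) :
    Matrix.trace (Y⁻¹ * A * Y⁻¹ * B) =
      ∑ m ∈ Finset.range (g * (g + 1) / 2), ∑ n ∈ Finset.range (g * (g + 1) / 2),
        (2 - if (pfin g hg n).1 = (pfin g hg n).2 then (1 : ℂ) else 0) *
          ddMat hg Y⁻¹ n m *
          A (pfin g hg m).1 (pfin g hg m).2 *
          B (pfin g hg n).1 (pfin g hg n).2 :=
  siegel_metric_pair_indices_general g hg Y A B hYs hAs hBs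
end
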